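/- Fix an integer P ≥ 1, distinct points p₁,…,p_P ∈ ℝ, an index j with target τ = p_j, constants σ_k² > 0, and noise variances s₁,…,s_P > 0. For bandwidth b > 0 let K(b) be the P×P matrix with entries K(b)_{ik} = σ_k²·exp(−(p_i−p_k)²/(2b²)), let k_*(b) ∈ ℝ^P have entries k_*(b)_i = σ_k²·exp(−(p_i−τ)²/(2b²)), let D = diag(s₁,…,s_P), and let W(b) = k_*(b)ᵀ(K(b)+D)⁻¹ (the matrix K(b)+D is positive definite, hence invertible, for every b > 0). Then as b → 0⁺ the weights concentrate on the target model: W(b)_i → 0 for every i ≠ j, and W(b)_j → σ_k²/(σ_k² + s_j). -/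

import Mathlib

/-!
As `b → 0⁺` the Gaussian factor `exp (-(x - y)² / (2b²))` tends to `0` for `x ≠ y` and equals `1`
for `x = y`. Since the points are distinct, `K(b) + D → diag (σ² + sᵢ)` and `k_*(b) → σ² eⱼ`, and
matrix inversion is continuous at this invertible diagonal limit, so
`W(b) → σ² eⱼ diag (σ² + sᵢ)⁻¹ = (σ² / (σ² + sⱼ)) eⱼ`.

Positive definiteness: `exp (-(x - y)² / (2b²)) = g(x) g(y) exp ((x/b)(y/b))` and
`exp (uv) = ∑ₙ uⁿvⁿ / n!` is a nonnegative combination of rank-one kernels, so the Gram matrix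
is positive semidefinite, and adding the positive diagonal `D` makes it positive definite.
-/

open Filter Matrix Topology

noncomputable def sqExpKernel (σ2 b x y : ℝ) : ℝ := σ2 * Real.exp (-(x - y) ^ 2 / (2 * b ^ 2))

noncomputable def sqExpGram {ι : Type*} (σ2 b : ℝ) (p : ι → ℝ) : Matrix ι ι ℝ :=
  of fun i k => sqExpKernel σ2 b (p i) (p k)

@[simp]
lemma sqExpKernel_self (σ2 b x : ℝ) : sqExpKernel σ2 b x x = σ2 := by
  simp [sqExpKernel]

lemma tendsto_sqExpKernel_of_ne (σ2 : ℝ) {x y : ℝ} (hxy : x ≠ y) :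
    Tendsto (fun b => sqExpKernel σ2 b x y) (𝓝[≠] 0) (𝓝 0) := by
  have hsq : Tendsto (fun b : ℝ => 2 * b ^ 2) (𝓝[≠] 0) (𝓝[>] 0) := by
    refine tendsto_nhdsWithin_of_tendsto_nhds_of_eventually_within _ ?_ ?_
    · exact ((by fun_prop : Continuous fun b : ℝ => 2 * b ^ 2).tendsto' 0 0 (by simp)).mono_left
        nhdsWithin_le_nhds
    · filter_upwards [self_mem_nhdsWithin] with b (hb : b ≠ 0)
      exact Set.mem_Ioi.2 (by positivity)
  have hexponent : Tendsto (fun b : ℝ => -(x - y) ^ 2 / (2 * b ^ 2)) (𝓝[≠] 0) atBot := by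
    have hd : 0 < (x - y) ^ 2 := by
      have := sub_ne_zero.2 hxy
      positivity
    exact (hsq.inv_tendsto_nhdsGT_zero.const_mul_atTop_of_neg (neg_lt_zero.2 hd)).congr
      fun b => by simp only [Pi.inv_apply, div_eq_mul_inv]
  simpa [sqExpKernel] using (Real.tendsto_exp_atBot.comp hexponent).const_mul σ2

lemma tendsto_sqExpKernel (σ2 x y : ℝ) :
    Tendsto (fun b => sqExpKernel σ2 b x y) (𝓝[≠] 0) (𝓝 (if x = y then σ2 else 0)) := by
  split_ifs with hxy
  · simp [hxy]
  · exact tendsto_sqExpKernel_of_ne σ2 hxy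

lemma tendsto_sqExpGram {ι : Type*} [DecidableEq ι] (σ2 : ℝ) {p : ι → ℝ}
    (hp : Function.Injective p) :
    Tendsto (fun b => sqExpGram σ2 b p) (𝓝[≠] 0) (𝓝 (diagonal fun _ => σ2)) :=
  tendsto_pi_nhds.2 fun i => tendsto_pi_nhds.2 fun k => by
    simpa [sqExpGram, diagonal_apply, hp.eq_iff] using tendsto_sqExpKernel σ2 (p i) (p k)

lemma tendsto_sqExpKernel_pi {ι : Type*} [DecidableEq ι] (σ2 : ℝ) {p : ι → ℝ}
    (hp : Function.Injective p) (j : ι) :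
    Tendsto (fun b i => sqExpKernel σ2 b (p i) (p j)) (𝓝[≠] 0) (𝓝 (Pi.single j σ2)) :=
  tendsto_pi_nhds.2 fun i => by
    simpa [Pi.single_apply, hp.eq_iff] using tendsto_sqExpKernel σ2 (p i) (p j)

lemma posSemidef_exp_mul {ι : Type*} [Fintype ι] (v : ι → ℝ) :
    (of fun i k => Real.exp (v i * v k)).PosSemidef := by
  refine posSemidef_iff_dotProduct_mulVec.2 ⟨?_, fun x => ?_⟩
  · ext i k
    simp [mul_comm]
  have hseries : HasSum (fun n : ℕ => (∑ i, x i * v i ^ n) ^ 2 / n.factorial)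
      (∑ i, ∑ k, x i * x k * Real.exp (v i * v k)) := by
    refine (hasSum_sum fun i _ => hasSum_sum fun k _ =>
      (Real.exp_eq_exp_ℝ ▸ NormedSpace.expSeries_div_hasSum_exp (v i * v k)).mul_left
        (x i * x k)).congr_fun fun n => ?_
    simp only [sq, Finset.sum_mul_sum, Finset.sum_div]
    refine Finset.sum_congr rfl fun i _ => Finset.sum_congr rfl fun k _ => ?_
    ring
  convert hseries.nonneg fun n => by positivity using 1
  simp only [dotProduct, mulVec, of_apply, star_trivial, Finset.mul_sum]
  exact Finset.sum_congr rfl fun i _ => Finset.sum_congr rfl fun k _ => by ring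

-- Also valid at `b = 0`, where every quotient is `0`.
lemma sqExpKernel_eq_mul (σ2 b x y : ℝ) :
    sqExpKernel σ2 b x y = σ2 * (Real.exp (-x ^ 2 / (2 * b ^ 2)) *
      Real.exp ((x / b) * (y / b)) * Real.exp (-y ^ 2 / (2 * b ^ 2))) := by
  rw [sqExpKernel, ← Real.exp_add, ← Real.exp_add]
  ring_nf

lemma posSemidef_sqExpGram {ι : Type*} [Fintype ι] [DecidableEq ι] {σ2 : ℝ} (hσ : 0 ≤ σ2)
    (b : ℝ) (p : ι → ℝ) : (sqExpGram σ2 b p).PosSemidef := by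
  set g : ι → ℝ := fun i => Real.exp (-p i ^ 2 / (2 * b ^ 2))
  have hfactor : sqExpGram σ2 b p =
      σ2 • (diagonal g * (of fun i k => Real.exp ((p i / b) * (p k / b))) * (diagonal g)ᴴ) := by
    ext i k
    simp [sqExpGram, sqExpKernel_eq_mul, diagonal_mul, mul_diagonal, g]
  rw [hfactor]
  exact ((posSemidef_exp_mul _).mul_mul_conjTranspose_same _).smul hσ

lemma Matrix.inv_diagonal_of_ne_zero {ι K : Type*} [Fintype ι] [DecidableEq ι] [Field K]
    {d : ι → K} (hd : ∀ i, d i ≠ 0) : (diagonal d)⁻¹ = diagonal d⁻¹ := by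
  refine inv_eq_right_inv ?_
  rw [diagonal_mul_diagonal, ← diagonal_one]
  exact congrArg diagonal (funext fun i => mul_inv_cancel₀ (hd i))

lemma Filter.Tendsto.vecMul_inv {α ι 𝕜 : Type*} [Fintype ι] [DecidableEq ι] [Field 𝕜]
    [TopologicalSpace 𝕜] [IsTopologicalDivisionRing 𝕜] {l : Filter α}
    {v : α → ι → 𝕜} {A : α → Matrix ι ι 𝕜} {w : ι → 𝕜} {L : Matrix ι ι 𝕜}
    (hv : Tendsto v l (𝓝 w)) (hA : Tendsto A l (𝓝 L)) (hL : L.det ≠ 0) :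
    Tendsto (fun a => v a ᵥ* (A a)⁻¹) l (𝓝 (w ᵥ* L⁻¹)) := by
  have hinv : ContinuousAt Inv.inv L :=
    continuousAt_matrix_inv L (by simpa [Ring.inverse_eq_inv'] using continuousAt_inv₀ hL)
  have hvecMul : Continuous fun q : (ι → 𝕜) × Matrix ι ι 𝕜 => q.1 ᵥ* q.2 :=
    continuous_fst.matrix_vecMul continuous_snd
  have hAinv : Tendsto (fun a => (A a)⁻¹) l (𝓝 L⁻¹) := hinv.tendsto.comp hA
  exact ((hvecMul.tendsto (w, L⁻¹)).comp (hv.prodMk_nhds hAinv) :)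

theorem gp_weights_concentrate_in_small_bandwidth_limit_general
    (P : ℕ) (p : Fin P → ℝ) (hp : Function.Injective p)
    (j : Fin P) (τ : ℝ) (hτ : τ = p j)
    (σk2 : ℝ) (hσ : 0 < σk2)
    (s : Fin P → ℝ) (hs : ∀ i, 0 < s i)
    (K : ℝ → Matrix (Fin P) (Fin P) ℝ)
    (hK : ∀ b, K b = Matrix.of fun i k =>
      σk2 * Real.exp (-(p i - p k) ^ 2 / (2 * b ^ 2)))
    (kstar : ℝ → Fin P → ℝ)
    (hkstar : ∀ b, kstar b = fun i => σk2 * Real.exp (-(p i - τ) ^ 2 / (2 * b ^ 2)))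
    (D : Matrix (Fin P) (Fin P) ℝ) (hD : D = Matrix.diagonal s)
    (W : ℝ → Fin P → ℝ)
    (hW : ∀ b, W b = Matrix.vecMul (kstar b) (K b + D)⁻¹) :
    (∀ b > (0 : ℝ), (K b + D).PosDef) ∧
    (∀ i : Fin P, i ≠ j →
      Tendsto (fun b : ℝ => W b i) (nhdsWithin 0 (Set.Ioi 0)) (nhds 0)) ∧
    Tendsto (fun b : ℝ => W b j) (nhdsWithin 0 (Set.Ioi 0))
      (nhds (σk2 / (σk2 + s j))) := by
  subst hτ hD
  have hK' : K = fun b => sqExpGram σk2 b p := funext hK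
  have hkstar' : kstar = fun b i => sqExpKernel σk2 b (p i) (p j) := funext hkstar
  have hdiag_ne : ∀ i, σk2 + s i ≠ 0 := fun i => (add_pos hσ (hs i)).ne'
  have hweights : Tendsto W (𝓝[>] 0) (𝓝 (Pi.single j (σk2 / (σk2 + s j)))) := by
    have hlimit := (tendsto_sqExpKernel_pi σk2 hp j).vecMul_inv
      ((tendsto_sqExpGram σk2 hp).add_const (diagonal s))
      (by simpa [diagonal_add, det_diagonal, Finset.prod_ne_zero_iff] using hdiag_ne)
    rw [diagonal_add, inv_diagonal_of_ne_zero hdiag_ne, single_vecMul_diagonal] at hlimit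
    simp only [funext hW, hK', hkstar', div_eq_mul_inv]
    exact hlimit.mono_left (nhdsWithin_mono 0 fun b (hb : 0 < b) => hb.ne')
  refine ⟨fun b _ => ?_, fun i hij => ?_, ?_⟩
  · rw [hK']
    exact PosDef.posSemidef_add (posSemidef_sqExpGram hσ.le b p) (PosDef.diagonal hs)
  · simpa [hij] using tendsto_pi_nhds.1 hweights i
  · simpa using tendsto_pi_nhds.1 hweights j

/-- As the bandwidth `b → 0⁺`, the Gaussian-process weights
`W(b) = k_*(b)ᵀ (K(b) + D)⁻¹` concentrate on the target model: `W(b)_i → 0`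
for `i ≠ j` and `W(b)_j → σ_k² / (σ_k² + s_j)`. -/
theorem gp_weights_concentrate_in_small_bandwidth_limit
    (P : ℕ) (hP : 1 ≤ P) (p : Fin P → ℝ) (hp : Function.Injective p)
    (j : Fin P) (τ : ℝ) (hτ : τ = p j)
    (σk2 : ℝ) (hσ : 0 < σk2)
    (s : Fin P → ℝ) (hs : ∀ i, 0 < s i)
    (K : ℝ → Matrix (Fin P) (Fin P) ℝ)
    (hK : ∀ b, K b = Matrix.of fun i k =>
      σk2 * Real.exp (-(p i - p k) ^ 2 / (2 * b ^ 2)))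
    (kstar : ℝ → Fin P → ℝ)
    (hkstar : ∀ b, kstar b = fun i => σk2 * Real.exp (-(p i - τ) ^ 2 / (2 * b ^ 2)))
    (D : Matrix (Fin P) (Fin P) ℝ) (hD : D = Matrix.diagonal s)
    (W : ℝ → Fin P → ℝ)
    (hW : ∀ b, W b = Matrix.vecMul (kstar b) (K b + D)⁻¹) :
    (∀ b > (0 : ℝ), (K b + D).PosDef) ∧
    (∀ i : Fin P, i ≠ j →
      Tendsto (fun b : ℝ => W b i) (nhdsWithin 0 (Set.Ioi 0)) (nhds 0)) ∧
    Tendsto (fun b : ℝ => W b j) (nhdsWithin 0 (Set.Ioi 0))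
      (nhds (σk2 / (σk2 + s j))) :=
  gp_weights_concentrate_in_small_bandwidth_limit_general P p hp j τ hτ σk2 hσ s hs K hK kstar
    hkstar D hD W hW
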